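/- If n is an odd positive integer, then γ'_SMB(P_n) = ⌊log_2 n⌋ + 1, where P_n is the path on n vertices. -/

import Mathlib

/-
Staller's strategy: a free segment of odd length `< 2 ^ k` whose two outer neighbours are
Staller's (or off the path) is won in `k` moves. She claims a vertex splitting it into two odd
segments of length `< 2 ^ (k - 1)`; Dominator can answer in only one of them, and she recurses
into the other. A segment of length one is won by claiming its vertex.

Dominator's strategy keeps a free interval of length `≥ 2 ^ j` and a set of disjoint free pairs
`{p, p + 1}` off the interval, such that every vertex outside both is already dominated. A move
on a pair is answered on its partner; a move outside is answered at an end of the interval; a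
move inside the interval is answered next to it, on the side of the shorter part, which is then
paired off. The interval at most halves, so Staller cannot win while it has length `≥ 2`, i.e.
during her first `⌊log₂ n⌋` moves.
-/
open scoped Classical

open scoped Classical

noncomputable section

/-- Minimax value of the Maker–Breaker game on hypergraph with edge set `E`:
`mbVal E t M B` is the minimum number of further moves Maker needs to claim all
vertices of some hyperedge (Maker has claimed `M`, Breaker has claimed `B`,
`t = true` iff Maker moves next), under optimal play; `⊤` if Maker cannot win. -/
def mbVal {V : Type} [Fintype V] (E : Set (Finset V)) :
    Bool → Finset V → Finset V → ℕ∞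
  | true, M, B =>
      if ∃ e ∈ E, e ⊆ M then 0
      else ⨅ v ∈ Finset.univ \ (M ∪ B), (1 + mbVal E false (insert v M) B)
  | false, M, B =>
      if ∃ e ∈ E, e ⊆ M then 0
      else if Finset.univ \ (M ∪ B) = ∅ then ⊤
      else ⨆ v ∈ Finset.univ \ (M ∪ B), mbVal E true M (insert v B)
termination_by _t M B => (Finset.univ \ (M ∪ B)).card
decreasing_by
  all_goals
    apply Finset.card_lt_card
    rw [Finset.ssubset_iff_of_subset]
    · refine ⟨v, ‹_›, by simp⟩
    · intro x hx
      simp only [Finset.mem_sdiff, Finset.mem_univ, true_and, Finset.mem_union,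
        Finset.mem_insert] at hx ⊢
      tauto

/-- The closed neighborhood of `v` as a finset. -/
def closedNbhdFinset {V : Type} [Fintype V] (G : SimpleGraph V) (v : V) : Finset V :=
  Finset.univ.filter (fun w => w = v ∨ G.Adj v w)

/-- The closed neighborhood hypergraph of a graph. -/
def nbhdHyp {V : Type} [Fintype V] (G : SimpleGraph V) : Set (Finset V) :=
  Set.range (closedNbhdFinset G)

/-- `γ'_SMB(G)`: the number of moves Staller (= Maker on the closed neighborhood
hypergraph, moving first) needs to win the Maker–Breaker domination game on `G`. -/
def gammaSMB' {V : Type} [Fintype V] (G : SimpleGraph V) : ℕ∞ :=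
  mbVal (nbhdHyp G) true ∅ ∅

end

open Finset SimpleGraph

abbrev Wins {V : Type} (E : Set (Finset V)) (M : Finset V) : Prop :=
  ∃ e ∈ E, e ⊆ M

section MakerBreaker

variable {V : Type} [Fintype V] {E : Set (Finset V)} {M B : Finset V}

lemma mbVal_false_of_wins (h : Wins E M) : mbVal E false M B = 0 := by
  rw [mbVal, if_pos h]

lemma mbVal_true_le {k : ℕ∞} {v : V} (hv : v ∉ M ∪ B)
    (h : mbVal E false (insert v M) B ≤ k) : mbVal E true M B ≤ 1 + k := by
  rw [mbVal]
  split_ifs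
  · exact zero_le
  · exact iInf₂_le_of_le v (mem_sdiff.2 ⟨mem_univ v, hv⟩) (add_le_add_right h 1)

lemma mbVal_false_le {k : ℕ∞} (hfree : ∃ u, u ∉ M ∪ B)
    (h : ∀ u ∉ M ∪ B, mbVal E true M (insert u B) ≤ k) : mbVal E false M B ≤ k := by
  obtain ⟨u, hu⟩ := hfree
  rw [mbVal]
  split_ifs with hM hfull
  · exact zero_le
  · exact absurd hfull (ne_empty_of_mem (mem_sdiff.2 ⟨mem_univ u, hu⟩))
  · exact iSup₂_le fun u hu => h u (mem_sdiff.1 hu).2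

lemma one_add_le_mbVal_true {k : ℕ∞} (hM : ¬ Wins E M)
    (h : ∀ v ∉ M ∪ B, k ≤ mbVal E false (insert v M) B) : 1 + k ≤ mbVal E true M B := by
  rw [mbVal, if_neg hM]
  exact le_iInf₂ fun v hv => add_le_add_right (h v (mem_sdiff.1 hv).2) 1

lemma one_le_mbVal_true (hM : ¬ Wins E M) : 1 ≤ mbVal E true M B := by
  simpa using one_add_le_mbVal_true (k := 0) (B := B) hM fun _ _ => zero_le

lemma le_mbVal_false {k : ℕ∞} {u : V} (hM : ¬ Wins E M) (hu : u ∉ M ∪ B)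
    (h : k ≤ mbVal E true M (insert u B)) : k ≤ mbVal E false M B := by
  rw [mbVal, if_neg hM, if_neg (ne_empty_of_mem (mem_sdiff.2 ⟨mem_univ u, hu⟩))]
  exact le_iSup₂_of_le u (mem_sdiff.2 ⟨mem_univ u, hu⟩) h

lemma one_le_mbVal_false (hM : ¬ Wins E M) : 1 ≤ mbVal E false M B := by
  by_cases hfree : ∃ u, u ∉ M ∪ B
  · obtain ⟨u, hu⟩ := hfree
    exact le_mbVal_false hM hu (one_le_mbVal_true hM)
  · push Not at hfree
    rw [mbVal, if_neg hM, if_pos (by ext u; simp [hfree u])]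
    exact le_top

theorem le_mbVal_of_invariant (I : ℕ → Finset V → Finset V → Prop)
    (hwin : ∀ j M B v, I (j + 1) M B → v ∉ M ∪ B → ¬ Wins E (insert v M))
    (hstep : ∀ j M B v, I (j + 2) M B → v ∉ M ∪ B →
      ∃ u ∉ insert v M ∪ B, I (j + 1) (insert v M) (insert u B))
    (j : ℕ) (hM : ¬ Wins E M) (hI : I j M B) : ((j + 1 : ℕ) : ℕ∞) ≤ mbVal E true M B := by
  induction j generalizing M B with
  | zero => simpa using one_le_mbVal_true hM
  | succ j ih =>
    rw [Nat.cast_succ, add_comm]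
    refine one_add_le_mbVal_true hM fun v hv => ?_
    have hwin' := hwin j M B v hI hv
    cases j with
    | zero => simpa using one_le_mbVal_false hwin'
    | succ j =>
      obtain ⟨u, hu, hI'⟩ := hstep j M B v hI hv
      exact le_mbVal_false hwin' hu (ih hwin' hI')

theorem mbVal_le_of_strategy (C : ℕ → Finset V → Finset V → Prop) (hC0 : ∀ M B, ¬ C 0 M B)
    (hstep : ∀ k M B, C (k + 1) M B → ∃ v ∉ M ∪ B, Wins E (insert v M) ∨
      ((∃ u, u ∉ insert v M ∪ B) ∧ ∀ u ∉ insert v M ∪ B, C k (insert v M) (insert u B)))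
    (k : ℕ) (hC : C k M B) : mbVal E true M B ≤ k := by
  induction k generalizing M B with
  | zero => exact absurd hC (hC0 M B)
  | succ k ih =>
    obtain ⟨v, hv, hwin | ⟨hfree, hnext⟩⟩ := hstep k M B hC
    · calc mbVal E true M B ≤ 1 + 0 := mbVal_true_le hv (mbVal_false_of_wins hwin).le
        _ ≤ _ := by simp
    · rw [Nat.cast_succ, add_comm]
      exact mbVal_true_le hv (mbVal_false_le hfree fun u hu => ih (hnext u hu))

end MakerBreaker

lemma notMem_insert_union_insert {V : Type} [DecidableEq V] {x v u : V} {M B : Finset V} :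
    x ∉ insert v M ∪ insert u B ↔ x ≠ v ∧ x ≠ u ∧ x ∉ M ∪ B := by
  simp only [mem_union, mem_insert, not_or]
  tauto

-- At `w = 0` the truncated subtraction `w - 1 = 0` still gives the right set `{0, 1}`.
def pathNbhd (n w : ℕ) : Finset ℕ := {x ∈ Icc (w - 1) (w + 1) | x < n}

lemma mem_pathNbhd {n w x : ℕ} : x ∈ pathNbhd n w ↔ w ≤ x + 1 ∧ x ≤ w + 1 ∧ x < n := by
  simp only [pathNbhd, mem_filter, mem_Icc]
  omega

lemma map_closedNbhdFinset_pathGraph {n : ℕ} (w : Fin n) :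
    (closedNbhdFinset (pathGraph n) w).map Fin.valEmbedding = pathNbhd n w := by
  ext x
  simp only [mem_map, closedNbhdFinset, mem_filter, mem_univ, true_and, pathGraph_adj,
    Fin.valEmbedding_apply, mem_pathNbhd]
  constructor
  · rintro ⟨y, hy, rfl⟩
    rw [Fin.ext_iff] at hy
    omega
  · intro hx
    exact ⟨⟨x, hx.2.2⟩, by rw [Fin.ext_iff]; dsimp; omega, rfl⟩

lemma wins_nbhdHyp_pathGraph_iff {n : ℕ} {M : Finset (Fin n)} :
    Wins (nbhdHyp (pathGraph n)) M ↔ ∃ w < n, pathNbhd n w ⊆ M.map Fin.valEmbedding := by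
  simp only [Wins, nbhdHyp, Set.exists_range_iff, ← map_subset_map (f := Fin.valEmbedding),
    map_closedNbhdFinset_pathGraph, Fin.exists_iff, exists_prop]

lemma val_mem_map_valEmbedding {n : ℕ} {M : Finset (Fin n)} {v : Fin n} :
    (v : ℕ) ∈ M.map Fin.valEmbedding ↔ v ∈ M :=
  mem_map' Fin.valEmbedding

-- A free segment `[start, start + len)` of odd length whose outer neighbours are Staller's or
-- off the path; from it Staller wins within `k` moves.
structure StallerPlan (n k : ℕ) (M B : Finset ℕ) where
  start : ℕ
  len : ℕ
  odd_len : Odd len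
  len_lt : len < 2 ^ k
  end_le : start + len ≤ n
  free : ∀ x, start ≤ x → x < start + len → x ∉ M ∪ B
  left_anchor : start = 0 ∨ start - 1 ∈ M
  right_anchor : start + len = n ∨ start + len ∈ M

namespace StallerPlan

variable {n k : ℕ} {M B : Finset ℕ}

def child (π : StallerPlan n (k + 1) M B) {v u : ℕ} (s l : ℕ) (hodd : Odd l) (hlt : l < 2 ^ k)
    (hv : π.start ≤ v ∧ v < π.start + π.len)
    (hchild : s = π.start ∧ s + l = v ∨ s = v + 1 ∧ s + l = π.start + π.len)
    (hu : u < s ∨ s + l ≤ u) : StallerPlan n k (insert v M) (insert u B) where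
  start := s
  len := l
  odd_len := hodd
  len_lt := hlt
  end_le := by have := π.end_le; omega
  free x hs hl := by
    rw [notMem_insert_union_insert]
    exact ⟨by omega, by omega, π.free x (by omega) (by omega)⟩
  left_anchor := by
    rcases hchild with ⟨rfl, -⟩ | ⟨rfl, -⟩
    · exact π.left_anchor.imp_right (mem_insert_of_mem ·)
    · exact Or.inr (by simp)
  right_anchor := by
    rcases hchild with ⟨-, h⟩ | ⟨-, h⟩ <;> rw [h]
    · exact Or.inr (mem_insert_self v M)
    · exact π.right_anchor.imp_right (mem_insert_of_mem ·)

lemma pathNbhd_subset_of_len_eq_one (π : StallerPlan n k M B) (h : π.len = 1) :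
    pathNbhd n π.start ⊆ insert π.start M := by
  intro x hx
  rw [mem_pathNbhd] at hx
  rcases (show x + 1 = π.start ∨ x = π.start ∨ x = π.start + 1 by omega) with hx' | rfl | rfl
  · have := π.left_anchor.resolve_left (by omega)
    rw [show x = π.start - 1 by omega]
    exact mem_insert_of_mem this
  · exact mem_insert_self _ _
  · have := π.right_anchor.resolve_left (by omega)
    rw [h] at this
    exact mem_insert_of_mem this

lemma exists_move (π : StallerPlan n (k + 1) M B) :
    ∃ v < n, v ∉ M ∪ B ∧ (pathNbhd n v ⊆ insert v M ∨
      ((∃ u < n, u ∉ insert v M ∪ B) ∧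
        ∀ u, u ∉ insert v M ∪ B → Nonempty (StallerPlan n k (insert v M) (insert u B)))) := by
  have hodd := Nat.odd_iff.1 π.odd_len
  have hlt := π.len_lt
  have hle := π.end_le
  rcases (show π.len = 1 ∨ 3 ≤ π.len by omega) with h1 | h3
  · exact ⟨π.start, by omega, π.free _ le_rfl (by omega),
      Or.inl (π.pathNbhd_subset_of_len_eq_one h1)⟩
  -- Staller splits the segment into two odd parts of nearly equal length, both `< 2 ^ k`.
  set l₁ := π.len / 4 * 2 + 1 with hl₁
  have hk : 2 ^ k % 2 = 0 := by
    rcases k with _ | k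
    · omega
    · rw [pow_succ]; omega
  rw [pow_succ] at hlt
  have hv : π.start ≤ π.start + l₁ ∧ π.start + l₁ < π.start + π.len := by omega
  refine ⟨π.start + l₁, by omega, π.free _ hv.1 hv.2,
    Or.inr ⟨⟨π.start, by omega, ?_⟩, fun u hu => ?_⟩⟩
  · have := π.free _ le_rfl (by omega)
    simp only [mem_union, mem_insert, not_or] at this ⊢
    exact ⟨⟨by omega, this.1⟩, this.2⟩
  · have hu' : u ≠ π.start + l₁ := by simp only [mem_union, mem_insert, not_or] at hu; omega
    by_cases hleft : π.start ≤ u ∧ u < π.start + l₁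
    · exact ⟨π.child (π.start + l₁ + 1) (π.len - l₁ - 1) (Nat.odd_iff.2 (by omega)) (by omega) hv
        (Or.inr ⟨rfl, by omega⟩) (by omega)⟩
    · exact ⟨π.child π.start l₁ (Nat.odd_iff.2 (by omega)) (by omega) hv (Or.inl ⟨rfl, rfl⟩)
        (by omega)⟩

def initial (ho : Odd n) : StallerPlan n (Nat.log 2 n + 1) ∅ ∅ where
  start := 0
  len := n
  odd_len := ho
  len_lt := Nat.lt_pow_succ_log_self one_lt_two n
  end_le := (zero_add n).le
  free := by simp
  left_anchor := Or.inl rfl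
  right_anchor := Or.inl (zero_add n)

end StallerPlan

theorem gammaSMB'_pathGraph_le {n : ℕ} (ho : Odd n) :
    gammaSMB' (pathGraph n) ≤ (Nat.log 2 n + 1 : ℕ) := by
  refine mbVal_le_of_strategy
    (fun k M B => Nonempty (StallerPlan n k (M.map Fin.valEmbedding) (B.map Fin.valEmbedding)))
    (fun M B ⟨π⟩ => ?_) (fun k M B ⟨π⟩ => ?_) _ ⟨StallerPlan.initial ho⟩
  · have hpos := π.odd_len.pos
    have hlt := π.len_lt
    rw [pow_zero] at hlt
    omega
  · obtain ⟨v, hvn, hv, hwin | ⟨⟨u, hun, hu⟩, hnext⟩⟩ := π.exists_move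
    all_goals lift v to Fin n using hvn
    all_goals refine ⟨v, by simpa only [mem_union, val_mem_map_valEmbedding] using hv, ?_⟩
    · exact Or.inl (wins_nbhdHyp_pathGraph_iff.2 ⟨v, v.isLt, by simpa [map_insert] using hwin⟩)
    · lift u to Fin n using hun
      refine Or.inr ⟨⟨u, by simpa only [mem_union, mem_insert, val_mem_map_valEmbedding,
        Fin.val_inj] using hu⟩, fun w hw => ?_⟩
      simpa [map_insert] using hnext w (by simpa only [mem_union, mem_insert,
        val_mem_map_valEmbedding, Fin.val_inj] using hw)

lemma disjoint_insert_insert {V : Type} [DecidableEq V] {M B : Finset V} {v u : V}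
    (h : Disjoint M B) (hv : v ∉ B) (hu : u ∉ M) (huv : u ≠ v) :
    Disjoint (insert v M) (insert u B) := by
  rw [disjoint_insert_left, disjoint_insert_right, mem_insert, not_or]
  exact ⟨⟨Ne.symm huv, hv⟩, hu, h⟩

-- A free interval `[a, b]` of length `≥ 2 ^ j` and disjoint free pairs `{p, p + 1}` off it, such
-- that every vertex outside both is dominated by `B`; Staller then needs more than `j` moves.
structure DominatorPlan (n j : ℕ) (M B : Finset ℕ) where
  a : ℕ
  b : ℕ
  pairs : Finset ℕ
  two_pow_le : 2 ^ j ≤ b + 1 - a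
  b_lt : b < n
  free : ∀ x, a ≤ x → x ≤ b → x ∉ M ∪ B
  pair_lt : ∀ p ∈ pairs, p + 1 < n
  pair_free : ∀ p ∈ pairs, p ∉ M ∪ B ∧ p + 1 ∉ M ∪ B
  pair_off : ∀ p ∈ pairs, p + 1 < a ∨ b < p
  succ_notMem : ∀ p ∈ pairs, p + 1 ∉ pairs
  disjoint : Disjoint M B
  cover : ∀ w < n, (a ≤ w ∧ w ≤ b) ∨ (∃ p ∈ pairs, p ≤ w ∧ w ≤ p + 1) ∨ ∃ x ∈ B, x ∈ pathNbhd n w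

def CanAnswer (n j : ℕ) (M B : Finset ℕ) (v : ℕ) : Prop :=
  ∃ u < n, u ∉ insert v M ∪ B ∧ Nonempty (DominatorPlan n j (insert v M) (insert u B))

namespace DominatorPlan

variable {n j k : ℕ} {M B : Finset ℕ} {v : ℕ}

lemma ne_of_mem_Icc (π : DominatorPlan n k M B) {x : ℕ} (ha : π.a ≤ x) (hb : x ≤ π.b) :
    ∀ p ∈ π.pairs, x ≠ p ∧ x ≠ p + 1 := fun p hp => by
  have := π.pair_off p hp
  omega

lemma not_subset (π : DominatorPlan n (j + 1) M B) (hv : v ∉ B) {w : ℕ} (hw : w < n) :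
    ¬ pathNbhd n w ⊆ insert v M := by
  intro h
  have two_free : ∀ x y, x ≠ y → x ∈ pathNbhd n w → y ∈ pathNbhd n w → x ∉ M → y ∉ M → False := by
    intro x y hxy hx hy hxM hyM
    rcases mem_insert.1 (h hx) with rfl | hxM'
    · rcases mem_insert.1 (h hy) with rfl | hyM'
      exacts [hxy rfl, hyM hyM']
    · exact hxM hxM'
  have hlen : 2 ≤ 2 ^ (j + 1) := Nat.le_self_pow j.succ_ne_zero 2
  have := π.two_pow_le
  have := π.b_lt
  rcases π.cover w hw with hI | ⟨p, hp, hpw⟩ | ⟨x, hxB, hx⟩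
  · -- `w` has a neighbour inside the interval, which has at least two vertices.
    have hw' := π.free w hI.1 hI.2
    by_cases hwb : w < π.b
    · have hw1 := π.free (w + 1) (by omega) (by omega)
      refine two_free w (w + 1) (by omega) ?_ ?_ (notMem_union.1 hw').1 (notMem_union.1 hw1).1 <;>
        rw [mem_pathNbhd] <;> omega
    · have hw1 := π.free (w - 1) (by omega) (by omega)
      refine two_free w (w - 1) (by omega) ?_ ?_ (notMem_union.1 hw').1 (notMem_union.1 hw1).1 <;>
        rw [mem_pathNbhd] <;> omega
  · have hpn := π.pair_lt p hp
    obtain ⟨hp0, hp1⟩ := π.pair_free p hp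
    refine two_free p (p + 1) (by omega) ?_ ?_ (notMem_union.1 hp0).1 (notMem_union.1 hp1).1 <;>
      rw [mem_pathNbhd] <;> omega
  · rcases mem_insert.1 (h hx) with rfl | hxM
    exacts [hv hxB, disjoint_left.1 π.disjoint hxM hxB]

lemma canAnswer_of_mem_Icc (π : DominatorPlan n k M B) {u : ℕ} (hu : π.a ≤ u ∧ u ≤ π.b)
    (huv : u ≠ v) (π' : DominatorPlan n j (insert v M) (insert u B)) : CanAnswer n j M B v := by
  have hu' := π.free u hu.1 hu.2
  have := π.b_lt
  refine ⟨u, by omega, ?_, ⟨π'⟩⟩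
  simp only [mem_union, mem_insert, not_or] at hu' ⊢
  exact ⟨⟨huv, hu'.1⟩, hu'.2⟩

-- Dominator answers `v` at `u` inside the interval, keeps the subinterval `[a', b']` and pairs off
-- the rest of the interval by `N`, except for vertices next to `u`.
def shrink (π : DominatorPlan n k M B) {u : ℕ} (a' b' : ℕ) (N : Finset ℕ)
    (hv : v ∉ M ∪ B) (hvP : ∀ p ∈ π.pairs, v ≠ p ∧ v ≠ p + 1) (hu : π.a ≤ u ∧ u ≤ π.b)
    (huv : u ≠ v) (hlen : 2 ^ j ≤ b' + 1 - a') (hsub : π.a ≤ a' ∧ b' ≤ π.b)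
    (hvI : v < a' ∨ b' < v) (huI : u < a' ∨ b' < u)
    (hN : ∀ p ∈ N, π.a ≤ p ∧ p + 1 ≤ π.b ∧ (p + 1 < a' ∨ b' < p) ∧
      v ≠ p ∧ v ≠ p + 1 ∧ u ≠ p ∧ u ≠ p + 1)
    (hNsucc : ∀ p ∈ N, p + 1 ∉ N)
    (hcover : ∀ w, π.a ≤ w → w ≤ π.b →
      (a' ≤ w ∧ w ≤ b') ∨ (∃ p ∈ N, p ≤ w ∧ w ≤ p + 1) ∨ (w ≤ u + 1 ∧ u ≤ w + 1)) :
    DominatorPlan n j (insert v M) (insert u B) where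
  a := a'
  b := b'
  pairs := π.pairs ∪ N
  two_pow_le := hlen
  b_lt := by have := π.b_lt; omega
  free x h₁ h₂ := by
    rw [notMem_insert_union_insert]
    exact ⟨by omega, by omega, π.free x (by omega) (by omega)⟩
  pair_lt p hp := by
    rcases mem_union.1 hp with hp | hp
    · exact π.pair_lt p hp
    · have := hN p hp; have := π.b_lt; omega
  pair_free p hp := by
    simp only [notMem_insert_union_insert]
    rcases mem_union.1 hp with hp | hp
    · have := hvP p hp; have := π.ne_of_mem_Icc hu.1 hu.2 p hp
      exact ⟨⟨by omega, by omega, (π.pair_free p hp).1⟩, by omega, by omega, (π.pair_free p hp).2⟩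
    · have := hN p hp
      exact ⟨⟨by omega, by omega, π.free p (by omega) (by omega)⟩, by omega, by omega,
        π.free (p + 1) (by omega) (by omega)⟩
  pair_off p hp := by
    rcases mem_union.1 hp with hp | hp
    · have := π.pair_off p hp; omega
    · exact (hN p hp).2.2.1
  succ_notMem p hp hp₁ := by
    rcases mem_union.1 hp with hp | hp <;> rcases mem_union.1 hp₁ with hp₁ | hp₁
    · exact π.succ_notMem p hp hp₁
    · have := π.pair_off p hp; have := hN _ hp₁; omega
    · have := π.pair_off _ hp₁; have := hN p hp; omega
    · exact hNsucc p hp hp₁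
  disjoint := disjoint_insert_insert π.disjoint (notMem_union.1 hv).2
    (notMem_union.1 (π.free u hu.1 hu.2)).1 huv
  cover w hw := by
    by_cases hwI : π.a ≤ w ∧ w ≤ π.b
    · rcases hcover w hwI.1 hwI.2 with h | ⟨p, hp, h⟩ | h
      · exact Or.inl h
      · exact Or.inr (Or.inl ⟨p, mem_union_right _ hp, h⟩)
      · have := π.b_lt
        exact Or.inr (Or.inr ⟨u, mem_insert_self u B, mem_pathNbhd.2 ⟨h.1, h.2, by omega⟩⟩)
    · rcases π.cover w hw with h | ⟨p, hp, h⟩ | ⟨x, hx, h⟩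
      · exact absurd h hwI
      · exact Or.inr (Or.inl ⟨p, mem_union_left _ hp, h⟩)
      · exact Or.inr (Or.inr ⟨x, mem_insert_of_mem hx, h⟩)

lemma canAnswer_right (π : DominatorPlan n (j + 2) M B) (hav : π.a ≤ v) (hvb : v < π.b)
    (hhalf : π.b - v ≤ v - π.a) : CanAnswer n (j + 1) M B v := by
  have hlen := π.two_pow_le
  rw [pow_succ] at hlen
  have hu : π.a ≤ v + 1 ∧ v + 1 ≤ π.b := ⟨by omega, by omega⟩
  -- `[v + 2, π.b]` is paired off from its right end; `v + 2` may be left over, next to `v + 1`.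
  refine π.canAnswer_of_mem_Icc hu (by omega) <| π.shrink π.a (v - 1)
    {p ∈ Ico (v + 2) π.b | (π.b - p) % 2 = 1} (π.free v hav hvb.le) (π.ne_of_mem_Icc hav hvb.le)
    hu (by omega) (by omega) ⟨le_rfl, by omega⟩ (by omega) (by omega) (fun p hp => ?_)
    (fun p hp hp₁ => ?_) (fun w h₁ h₂ => ?_)
  · simp only [mem_filter, mem_Ico] at hp; omega
  · simp only [mem_filter, mem_Ico] at hp hp₁; omega
  · by_cases hw : w ≤ v + 2
    · by_cases hw' : w < v
      · exact Or.inl ⟨h₁, by omega⟩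
      · exact Or.inr (Or.inr ⟨by omega, by omega⟩)
    · refine Or.inr (Or.inl ?_)
      rcases Nat.mod_two_eq_zero_or_one (π.b - w) with h | h
      · exact ⟨w - 1, by simp only [mem_filter, mem_Ico]; omega, by omega, by omega⟩
      · exact ⟨w, by simp only [mem_filter, mem_Ico]; omega, le_rfl, by omega⟩

lemma canAnswer_left (π : DominatorPlan n (j + 2) M B) (hav : π.a < v) (hvb : v ≤ π.b)
    (hhalf : v - π.a < π.b - v) : CanAnswer n (j + 1) M B v := by
  have hlen := π.two_pow_le
  rw [pow_succ] at hlen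
  have hu : π.a ≤ v - 1 ∧ v - 1 ≤ π.b := ⟨by omega, by omega⟩
  refine π.canAnswer_of_mem_Icc hu (by omega) <| π.shrink (v + 1) π.b
    {p ∈ Ico π.a (v - 2) | (p - π.a) % 2 = 0} (π.free v hav.le hvb) (π.ne_of_mem_Icc hav.le hvb)
    hu (by omega) (by omega) ⟨by omega, le_rfl⟩ (by omega) (by omega) (fun p hp => ?_)
    (fun p hp hp₁ => ?_) (fun w h₁ h₂ => ?_)
  · simp only [mem_filter, mem_Ico] at hp; omega
  · simp only [mem_filter, mem_Ico] at hp hp₁; omega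
  · by_cases hw : v - 2 ≤ w
    · by_cases hw' : v < w
      · exact Or.inl ⟨by omega, h₂⟩
      · exact Or.inr (Or.inr ⟨by omega, by omega⟩)
    · refine Or.inr (Or.inl ?_)
      rcases Nat.mod_two_eq_zero_or_one (w - π.a) with h | h
      · exact ⟨w, by simp only [mem_filter, mem_Ico]; omega, le_rfl, by omega⟩
      · exact ⟨w - 1, by simp only [mem_filter, mem_Ico]; omega, by omega, by omega⟩

lemma canAnswer_right_end (π : DominatorPlan n (j + 2) M B) (hv : v = π.b) :
    CanAnswer n (j + 1) M B v := by
  have hlen := π.two_pow_le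
  have hpos : 2 ≤ 2 ^ (j + 1) := Nat.le_self_pow j.succ_ne_zero 2
  rw [pow_succ] at hlen
  have hu : π.a ≤ v - 1 ∧ v - 1 ≤ π.b := ⟨by omega, by omega⟩
  refine π.canAnswer_of_mem_Icc hu (by omega) <| π.shrink π.a (π.b - 2) ∅
    (π.free v (by omega) hv.le) (π.ne_of_mem_Icc (by omega) hv.le) hu (by omega) (by omega)
    ⟨le_rfl, by omega⟩ (by omega) (by omega) (by simp) (by simp) (fun w h₁ h₂ => ?_)
  by_cases hw : w ≤ π.b - 2
  · exact Or.inl ⟨h₁, hw⟩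
  · exact Or.inr (Or.inr ⟨by omega, by omega⟩)

lemma canAnswer_left_end (π : DominatorPlan n (j + 2) M B) (hv : v = π.a) :
    CanAnswer n (j + 1) M B v := by
  have hlen := π.two_pow_le
  have hpos : 2 ≤ 2 ^ (j + 1) := Nat.le_self_pow j.succ_ne_zero 2
  rw [pow_succ] at hlen
  have hu : π.a ≤ v + 1 ∧ v + 1 ≤ π.b := ⟨by omega, by omega⟩
  refine π.canAnswer_of_mem_Icc hu (by omega) <| π.shrink (π.a + 2) π.b ∅
    (π.free v hv.ge (by omega)) (π.ne_of_mem_Icc hv.ge (by omega)) hu (by omega) (by omega)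
    ⟨by omega, le_rfl⟩ (by omega) (by omega) (by simp) (by simp) (fun w h₁ h₂ => ?_)
  by_cases hw : π.a + 2 ≤ w
  · exact Or.inl ⟨hw, h₂⟩
  · exact Or.inr (Or.inr ⟨by omega, by omega⟩)

lemma canAnswer_outside (π : DominatorPlan n (j + 2) M B) (hv : v ∉ M ∪ B)
    (hvI : v < π.a ∨ π.b < v) (hvP : ∀ p ∈ π.pairs, v ≠ p ∧ v ≠ p + 1) :
    CanAnswer n (j + 1) M B v := by
  have hlen := π.two_pow_le
  have hpos : 1 ≤ 2 ^ (j + 1) := Nat.one_le_two_pow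
  rw [pow_succ] at hlen
  have hu : π.a ≤ π.a ∧ π.a ≤ π.b := ⟨le_rfl, by omega⟩
  refine π.canAnswer_of_mem_Icc hu (by omega) <| π.shrink (π.a + 1) π.b ∅ hv hvP hu (by omega)
    (by omega) ⟨by omega, le_rfl⟩ (by omega) (by omega) (by simp) (by simp) (fun w h₁ h₂ => ?_)
  by_cases hw : π.a + 1 ≤ w
  · exact Or.inl ⟨hw, h₂⟩
  · exact Or.inr (Or.inr ⟨by omega, by omega⟩)

lemma canAnswer_of_mem_pair (π : DominatorPlan n (j + 1) M B) {p : ℕ} (hp : p ∈ π.pairs)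
    (hv : v = p ∨ v = p + 1) : CanAnswer n j M B v := by
  obtain ⟨u, hpu, hup, huv⟩ : ∃ u, p ≤ u ∧ u ≤ p + 1 ∧ u ≠ v := by
    rcases hv with rfl | rfl
    exacts [⟨v + 1, by omega, le_rfl, by omega⟩, ⟨p, le_rfl, by omega, by omega⟩]
  have hpn := π.pair_lt p hp
  have hoff := π.pair_off p hp
  obtain ⟨hp₀, hp₁⟩ := π.pair_free p hp
  have hu : u ∉ M ∪ B := by rcases (show u = p ∨ u = p + 1 by omega) with rfl | rfl <;> assumption
  have hv' : v ∉ M ∪ B := by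
    rcases (show v = p ∨ v = p + 1 by omega) with rfl | rfl <;> assumption
  refine ⟨u, by omega, ?_, ⟨{
    a := π.a, b := π.b, pairs := π.pairs.erase p,
    two_pow_le := (Nat.pow_le_pow_right two_pos j.le_succ).trans π.two_pow_le, b_lt := π.b_lt,
    free := fun x h₁ h₂ => ?_, pair_lt := fun q hq => π.pair_lt q (mem_of_mem_erase hq),
    pair_free := fun q hq => ?_, pair_off := fun q hq => π.pair_off q (mem_of_mem_erase hq),
    succ_notMem := fun q hq hq₁ => π.succ_notMem q (mem_of_mem_erase hq) (mem_of_mem_erase hq₁),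
    disjoint := disjoint_insert_insert π.disjoint (notMem_union.1 hv').2 (notMem_union.1 hu).1 huv,
    cover := fun w hw => ?_ }⟩⟩
  · simp only [mem_union, mem_insert, not_or] at hu ⊢
    exact ⟨⟨huv, hu.1⟩, hu.2⟩
  · rw [notMem_insert_union_insert]
    exact ⟨by omega, by omega, π.free x h₁ h₂⟩
  · -- Distinct pairs are disjoint, so `q` and `q + 1` differ from `p` and `p + 1`.
    obtain ⟨hqp, hq⟩ := mem_erase.1 hq
    have h₁ : q + 1 ≠ p := fun h => π.succ_notMem q hq (h ▸ hp)
    have h₂ : q ≠ p + 1 := fun h => π.succ_notMem p hp (h ▸ hq)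
    simp only [notMem_insert_union_insert]
    exact ⟨⟨by omega, by omega, (π.pair_free q hq).1⟩, by omega, by omega, (π.pair_free q hq).2⟩
  · rcases π.cover w hw with h | ⟨q, hq, h⟩ | ⟨x, hx, h⟩
    · exact Or.inl h
    · by_cases hqp : q = p
      · exact Or.inr (Or.inr ⟨u, mem_insert_self u B,
          mem_pathNbhd.2 ⟨by omega, by omega, by omega⟩⟩)
      · exact Or.inr (Or.inl ⟨q, mem_erase.2 ⟨hqp, hq⟩, h⟩)
    · exact Or.inr (Or.inr ⟨x, mem_insert_of_mem hx, h⟩)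

lemma canAnswer (π : DominatorPlan n (j + 2) M B) (hv : v ∉ M ∪ B) : CanAnswer n (j + 1) M B v := by
  by_cases hI : π.a ≤ v ∧ v ≤ π.b
  · rcases (show (v < π.b ∧ π.b - v ≤ v - π.a) ∨ v = π.b ∨ (π.a < v ∧ v - π.a < π.b - v) ∨
        v = π.a by omega) with h | h | h | h
    · exact π.canAnswer_right hI.1 h.1 h.2
    · exact π.canAnswer_right_end h
    · exact π.canAnswer_left h.1 hI.2 h.2
    · exact π.canAnswer_left_end h
  · by_cases hP : ∃ p ∈ π.pairs, v = p ∨ v = p + 1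
    · obtain ⟨p, hp, hvp⟩ := hP
      exact π.canAnswer_of_mem_pair hp hvp
    · push Not at hP
      exact π.canAnswer_outside hv (by omega) hP

def initial (hn : n ≠ 0) : DominatorPlan n (Nat.log 2 n) ∅ ∅ where
  a := 0
  b := n - 1
  pairs := ∅
  two_pow_le := by have := Nat.pow_log_le_self 2 hn; omega
  b_lt := by omega
  free := by simp
  pair_lt := by simp
  pair_free := by simp
  pair_off := by simp
  succ_notMem := by simp
  disjoint := disjoint_empty_left _
  cover w hw := Or.inl ⟨Nat.zero_le w, by omega⟩

end DominatorPlan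

theorem le_gammaSMB'_pathGraph {n : ℕ} (hn : n ≠ 0) :
    ((Nat.log 2 n + 1 : ℕ) : ℕ∞) ≤ gammaSMB' (pathGraph n) := by
  refine le_mbVal_of_invariant
    (fun j M B => Nonempty (DominatorPlan n j (M.map Fin.valEmbedding) (B.map Fin.valEmbedding)))
    (fun j M B v hπ hv => ?_) (fun j M B v hπ hv => ?_) _ ?_ ⟨DominatorPlan.initial hn⟩
  · obtain ⟨π⟩ := hπ
    rw [wins_nbhdHyp_pathGraph_iff]
    rintro ⟨w, hw, hsub⟩
    refine π.not_subset (v := v) ?_ hw (by simpa [map_insert] using hsub)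
    simp only [mem_union, not_or] at hv
    exact fun h => hv.2 (val_mem_map_valEmbedding.1 h)
  · obtain ⟨π⟩ := hπ
    obtain ⟨u, hun, hu, ⟨π'⟩⟩ := π.canAnswer (v := v)
      (by simpa only [mem_union, val_mem_map_valEmbedding] using hv)
    lift u to Fin n using hun
    refine ⟨u, by simpa only [mem_union, mem_insert, val_mem_map_valEmbedding, Fin.val_inj]
      using hu, ?_⟩
    simpa only [map_insert, Fin.valEmbedding_apply] using (⟨π'⟩ : Nonempty _)
  · rw [wins_nbhdHyp_pathGraph_iff]
    rintro ⟨w, hw, hsub⟩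
    simpa using hsub (mem_pathNbhd.2 ⟨by omega, by omega, hw⟩)

theorem stmt_11_general (n : ℕ) (ho : Odd n) :
    gammaSMB' (SimpleGraph.pathGraph n) = (Nat.log 2 n + 1 : ℕ) :=
  le_antisymm (gammaSMB'_pathGraph_le ho) (le_gammaSMB'_pathGraph ho.pos.ne')

/-- If `n` is an odd positive integer, then `γ'_SMB(P_n) = ⌊log₂ n⌋ + 1`. -/
theorem stmt_11 (n : ℕ) (hn : 0 < n) (ho : Odd n) :
    gammaSMB' (SimpleGraph.pathGraph n) = (Nat.log 2 n + 1 : ℕ) :=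
  stmt_11_general n ho
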